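/- arXiv:2309.07676 — 11 statements merged into one kernel-verified Lean document; each statement's English description precedes it below -/
import Mathlib

section
/- If (V,H) is a matroid, then (V, H^up) is a matroid. -/
variable {α : Type*} [DecidableEq α]

/-- A (finite) simplicial complex on vertex set `V`. -/
def IsComplex (V : Finset α) (H : Set (Finset α)) : Prop :=
  (∀ X ∈ H, X ⊆ V) ∧ (∀ v ∈ V, ({v} : Finset α) ∈ H) ∧
    (∀ X ∈ H, ∀ Y : Finset α, Y ⊆ X → Y ∈ H)

/-- The exchange property. -/
def HasExchange (H : Set (Finset α)) : Prop :=
  ∀ I ∈ H, ∀ J ∈ H, I.card = J.card + 1 → ∃ i ∈ I, i ∉ J ∧ insert i J ∈ H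

/-- A matroid: a simplicial complex satisfying the exchange property. -/
def IsMatroid (V : Finset α) (H : Set (Finset α)) : Prop :=
  IsComplex V H ∧ HasExchange H

/-- The up operator: `H^up = H ∪ { I ∪ {p} : I ∈ H, p ∈ V \ I }`. -/
def up (V : Finset α) (H : Set (Finset α)) : Set (Finset α) :=
  H ∪ {X | ∃ I ∈ H, ∃ p ∈ V, p ∉ I ∧ X = insert p I}

/- Every member of `H^up` is within one element of a member of `H`, so an exchange for `H^up`
is found by augmenting inside `H` and then putting the extra element back. -/

lemma IsComplex.isLowerSet {β : Type*} {V : Finset β} {H : Set (Finset β)}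
    (hH : IsComplex V H) : IsLowerSet H :=
  fun _ _ hYX hX => hH.2.2 _ hX _ hYX

section Up

variable {V : Finset α} {H : Set (Finset α)}

lemma insert_mem_up {I : Finset α} (hI : I ∈ H) {p : α} (hp : p ∈ V) (hpI : p ∉ I) :
    insert p I ∈ up V H :=
  Or.inr ⟨I, hI, p, hp, hpI, rfl⟩

lemma subset_of_mem_up (hsub : ∀ X ∈ H, X ⊆ V) {X : Finset α} (hX : X ∈ up V H) : X ⊆ V := by
  rcases hX with hX | ⟨I, hI, p, hp, -, rfl⟩
  · exact hsub X hX
  · exact Finset.insert_subset hp (hsub I hI)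

lemma exists_mem_subset_card_le_of_mem_up {X : Finset α} (hX : X ∈ up V H) :
    ∃ Y ∈ H, Y ⊆ X ∧ X.card ≤ Y.card + 1 := by
  rcases hX with hX | ⟨I, hI, p, -, -, rfl⟩
  · exact ⟨X, hX, subset_rfl, Nat.le_succ _⟩
  · exact ⟨I, hI, Finset.subset_insert p I, Finset.card_insert_le p I⟩

lemma IsLowerSet.up (hH : IsLowerSet H) : IsLowerSet (up V H) := by
  rintro X Y hYX (hX | ⟨I, hI, p, hp, hpI, rfl⟩)
  · exact Or.inl (hH hYX hX)
  by_cases hpY : p ∈ Y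
  · rw [← Finset.insert_erase hpY]
    refine insert_mem_up (hH ?_ hI) hp (Finset.notMem_erase p Y)
    simpa [hpI] using Finset.erase_subset_erase p hYX
  · exact Or.inl (hH ((Finset.subset_insert_iff_of_notMem hpY).mp hYX) hI)

lemma HasExchange.exists_insert_mem (hex : HasExchange H) (hH : IsLowerSet H)
    {A B : Finset α} (hA : A ∈ H) (hB : B ∈ H) (hBA : B.card < A.card) :
    ∃ a ∈ A, a ∉ B ∧ insert a B ∈ H := by
  obtain ⟨A', hA'A, hcard⟩ := Finset.exists_subset_card_eq (Nat.succ_le_of_lt hBA)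
  obtain ⟨a, ha, haB, hins⟩ := hex A' (hH hA'A hA) B hB hcard
  exact ⟨a, hA'A ha, haB, hins⟩

lemma HasExchange.up (hex : HasExchange H) (hH : IsLowerSet H) (hsub : ∀ X ∈ H, X ⊆ V) :
    HasExchange (up V H) := by
  intro I hI J hJ hcard
  by_cases hJH : J ∈ H
  · obtain ⟨i, hiI, hiJ⟩ : ∃ i ∈ I, i ∉ J :=
      Finset.not_subset.mp fun hIJ => by have := Finset.card_le_card hIJ; omega
    exact ⟨i, hiI, hiJ, insert_mem_up hJH (subset_of_mem_up hsub hI hiI) hiJ⟩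
  obtain ⟨J₀, hJ₀, q, hq, hqJ₀, rfl⟩ := hJ.resolve_left hJH
  obtain ⟨I₀, hI₀, hI₀I, hI₀card⟩ := exists_mem_subset_card_le_of_mem_up hI
  have hJcard := Finset.card_insert_of_notMem hqJ₀
  obtain ⟨a, haI₀, haJ₀, hins⟩ := hex.exists_insert_mem hH hI₀ hJ₀ (by omega)
  have haq : a ≠ q := by rintro rfl; exact hJH hins
  refine ⟨a, hI₀I haI₀, by simp [haq, haJ₀], ?_⟩
  rw [Finset.insert_comm]
  exact insert_mem_up hins hq (by simp [haq.symm, hqJ₀])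

lemma IsComplex.up (hH : IsComplex V H) : IsComplex V (up V H) :=
  ⟨fun _ => subset_of_mem_up hH.1, fun v hv => Or.inl (hH.2.1 v hv),
    fun _ hX _ hYX => hH.isLowerSet.up hYX hX⟩

end Up

theorem up_isMatroid_general (V : Finset α) (H : Set (Finset α))
    (hH : IsMatroid V H) : IsMatroid V (up V H) :=
  ⟨hH.1.up, hH.2.up hH.1.isLowerSet hH.1.1⟩

/-- If `(V,H)` is a matroid, then `(V, H^up)` is a matroid. -/
theorem up_isMatroid (V : Finset α) (H : Set (Finset α)) (hV : V.Nonempty)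
    (hH : IsMatroid V H) : IsMatroid V (up V H) :=
  up_isMatroid_general V H hH
end

section
/- Let (V,H) be a paving complex of dimension d (i.e. all subsets of V of size at most d+1 whose size is at most d belong to H, and H ⊆ P_{≤ d+1}(V)). Then for every m ≥ 0, the m-th iterate of the up operator satisfies H^{up^m} = P_{≤ d+m+1}(V) \ { X ⊆ V : |X| = d+m+1 and no (d+1)-subset of X belongs to H }. -/
variable {α : Type*} [DecidableEq α]

/-- A paving complex of dimension `d`: `P_{≤d}(V) ⊆ H ⊆ P_{≤d+1}(V)` with a face
of size `d+1`. -/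
def IsPav (V : Finset α) (H : Set (Finset α)) (d : ℕ) : Prop :=
  IsComplex V H ∧ (∀ X : Finset α, X ⊆ V → X.card ≤ d → X ∈ H) ∧
    (∀ X ∈ H, X.card ≤ d + 1) ∧ (∃ X ∈ H, X.card = d + 1)

/-!
Let `L_n = Pav.level V H d n` be `P_{≤ n}(V)` without the `n`-sets that contain no
`(d+1)`-face of `H`; a paving complex of dimension `d` is `L_{d+1}`, and for `n ≥ d + 1` one
application of `up` turns `L_n` into `L_{n+1}`. The only non-obvious inclusion is that an
`(n+1)`-set `X` containing a `(d+1)`-face `Z` is reached: as `|Z| < |X|` there is a point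
`p ∈ X \ Z`, and `X = insert p (X.erase p)` with `Z ⊆ X.erase p ∈ L_n`.
-/

namespace Pav

omit [DecidableEq α]

def level (V : Finset α) (H : Set (Finset α)) (d n : ℕ) : Set (Finset α) :=
  {X : Finset α | X ⊆ V ∧ X.card ≤ n} \
    {X : Finset α | X.card = n ∧ ∀ Z ⊆ X, Z.card = d + 1 → Z ∉ H}

variable {V X : Finset α} {H : Set (Finset α)} {d n : ℕ}

theorem mem_level :
    X ∈ level V H d n ↔
      X ⊆ V ∧ X.card ≤ n ∧ (X.card = n → ∃ Z ⊆ X, Z.card = d + 1 ∧ Z ∈ H) := by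
  simp only [level, Set.mem_sdiff, Set.mem_ofPred_eq, not_and, not_forall, not_not, exists_prop,
    and_assoc]

theorem mem_level_of_card_lt (hXV : X ⊆ V) (hX : X.card < n) : X ∈ level V H d n :=
  mem_level.2 ⟨hXV, hX.le, fun h => absurd h hX.ne⟩

theorem eq_level_of_isPav (hH : IsPav V H d) : H = level V H d (d + 1) := by
  obtain ⟨⟨hHV, -, -⟩, hsmall, hcard, -⟩ := hH
  ext X
  refine ⟨fun hX => mem_level.2 ⟨hHV X hX, hcard X hX, fun _ => ⟨X, subset_rfl, ‹_›, hX⟩⟩,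
    fun hX => ?_⟩
  obtain ⟨hXV, hXn, htop⟩ := mem_level.1 hX
  rcases hXn.lt_or_eq with hlt | heq
  · exact hsmall X hXV (Nat.lt_succ_iff.1 hlt)
  · obtain ⟨Z, hZX, hZ, hZH⟩ := htop heq
    rwa [← Finset.eq_of_subset_of_card_le hZX (hZ ▸ heq ▸ le_rfl)]

theorem level_subset_level_succ : level V H d n ⊆ level V H d (n + 1) := fun X hX => by
  obtain ⟨hXV, hXn, -⟩ := mem_level.1 hX
  exact mem_level_of_card_lt hXV (Nat.lt_succ_of_le hXn)

variable [DecidableEq α]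

theorem insert_mem_level_succ {I : Finset α} {p : α} (hI : I ∈ level V H d n) (hp : p ∈ V)
    (hpI : p ∉ I) : insert p I ∈ level V H d (n + 1) := by
  obtain ⟨hIV, hIn, htop⟩ := mem_level.1 hI
  rw [mem_level, Finset.card_insert_of_notMem hpI]
  refine ⟨Finset.insert_subset hp hIV, by omega, fun h => ?_⟩
  obtain ⟨Z, hZI, hZ⟩ := htop (by omega)
  exact ⟨Z, hZI.trans (Finset.subset_insert p I), hZ⟩

theorem up_level_subset : up V (level V H d n) ⊆ level V H d (n + 1) := by
  rintro X (hX | ⟨I, hI, p, hp, hpI, rfl⟩)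
  · exact level_subset_level_succ hX
  · exact insert_mem_level_succ hI hp hpI

theorem mem_up_of_erase_mem {p : α} (hpX : p ∈ X) (hXV : X ⊆ V)
    (herase : X.erase p ∈ level V H d n) : X ∈ up V (level V H d n) :=
  Or.inr ⟨X.erase p, herase, p, hXV hpX, Finset.notMem_erase p X, (Finset.insert_erase hpX).symm⟩

theorem level_succ_subset_up (hn : d + 1 ≤ n) : level V H d (n + 1) ⊆ up V (level V H d n) := by
  intro X hX
  obtain ⟨hXV, hXn, htop⟩ := mem_level.1 hX
  have herase_subset {p : α} : X.erase p ⊆ V := (Finset.erase_subset p X).trans hXV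
  rcases hXn.lt_or_eq with hlt | heq
  · by_cases hXold : X ∈ level V H d n
    · exact Or.inl hXold
    -- `X` is an `n`-set without a `(d+1)`-face; erasing any point lands below the top size.
    have hcard : X.card = n := by
      by_contra hne
      exact hXold (mem_level_of_card_lt hXV (by omega))
    obtain ⟨p, hpX⟩ := Finset.card_pos.1 (show 0 < X.card by omega)
    refine mem_up_of_erase_mem hpX hXV (mem_level_of_card_lt herase_subset ?_)
    rw [Finset.card_erase_of_mem hpX]
    omega
  · obtain ⟨Z, hZX, hZ, hZH⟩ := htop heq
    obtain ⟨p, hpX, hpZ⟩ := Finset.exists_of_ssubset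
      (hZX.ssubset_of_ne (by rintro rfl; omega))
    have hcard : (X.erase p).card = n := by
      rw [Finset.card_erase_of_mem hpX]
      omega
    exact mem_up_of_erase_mem hpX hXV <| mem_level.2
      ⟨herase_subset, hcard.le, fun _ => ⟨Z, Finset.subset_erase.2 ⟨hZX, hpZ⟩, hZ, hZH⟩⟩

theorem up_level (hn : d + 1 ≤ n) : up V (level V H d n) = level V H d (n + 1) :=
  up_level_subset.antisymm (level_succ_subset_up hn)

theorem iterate_up_level (hn : d + 1 ≤ n) (m : ℕ) :
    (up V)^[m] (level V H d n) = level V H d (n + m) := by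
  induction m with
  | zero => rfl
  | succ m ih =>
    rw [Function.iterate_succ_apply', ih, up_level (hn.trans (Nat.le_add_right n m))]
    rfl

end Pav

theorem iterate_up_pav_general (V : Finset α) (H : Set (Finset α))
    (d : ℕ) (hH : IsPav V H d) (m : ℕ) :
    (up V)^[m] H =
      {X : Finset α | X ⊆ V ∧ X.card ≤ d + m + 1} \
        {X : Finset α | X.card = d + m + 1 ∧ ∀ Z ⊆ X, Z.card = d + 1 → Z ∉ H} := by
  have h := Pav.iterate_up_level (V := V) (H := H) (d := d) le_rfl m
  rw [← Pav.eq_level_of_isPav hH, Nat.add_right_comm] at h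
  exact h

/-- For a paving complex of dimension `d` and any `m ≥ 0`, the `m`-th iterate of
the up operator equals `P_{≤ d+m+1}(V)` minus the sets of size exactly `d+m+1`
none of whose `(d+1)`-subsets is a face. -/
theorem iterate_up_pav (V : Finset α) (H : Set (Finset α)) (hV : V.Nonempty)
    (d : ℕ) (hH : IsPav V H d) (m : ℕ) :
    (up V)^[m] H =
      {X : Finset α | X ⊆ V ∧ X.card ≤ d + m + 1} \
        {X : Finset α | X.card = d + m + 1 ∧ ∀ Z ⊆ X, Z.card = d + 1 → Z ∉ H} :=
  iterate_up_pav_general V H d hH m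
end

section
/- Let Γ = (V,E) be a graph, viewed as a simplicial complex of dimension ≤ 1 (vertices and edges). Then for every m ≥ 0, Γ^{up^m} has as faces exactly the subsets of V of size at most m+2, except those of size exactly m+2 which are anticliques (independent sets) of Γ. -/
variable {α : Type*} [DecidableEq α]

/-!
`T_k = truncation V E k` consists of the sets of at most `k` vertices, minus the anticliques
of size exactly `k`.
A graph is `T_2`, and `up (T_k) = T_(k+1)` once `k ≥ 2`: adding a vertex to a set that is not
an anticlique never produces an anticlique; conversely an anticlique of size `k` is a smaller
set plus a vertex, and a non-anticlique of size `k + 1 ≥ 3` still contains an edge after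
deleting a vertex outside that edge.
-/

open Finset

def IsAnticlique (E : Set (Finset α)) (X : Finset α) : Prop :=
  ∀ a ∈ X, ∀ b ∈ X, a ≠ b → ({a, b} : Finset α) ∉ E

def truncation (V : Finset α) (E : Set (Finset α)) (k : ℕ) : Set (Finset α) :=
  {X | X ⊆ V ∧ #X ≤ k} \ {X | #X = k ∧ IsAnticlique E X}

section

variable {V X Y : Finset α} {E H : Set (Finset α)} {k : ℕ}

theorem IsAnticlique.mono (hX : IsAnticlique E X) (hYX : Y ⊆ X) : IsAnticlique E Y :=
  fun a ha b hb ↦ hX a (hYX ha) b (hYX hb)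

theorem not_isAnticlique_iff :
    ¬IsAnticlique E X ↔ ∃ a ∈ X, ∃ b ∈ X, a ≠ b ∧ ({a, b} : Finset α) ∈ E := by
  simp only [IsAnticlique, not_forall, not_not, exists_prop]

theorem exists_not_isAnticlique_erase (hX : ¬IsAnticlique E X) (hcard : 3 ≤ #X) :
    ∃ p ∈ X, ¬IsAnticlique E (X.erase p) := by
  obtain ⟨a, ha, b, hb, hab, habE⟩ := not_isAnticlique_iff.mp hX
  obtain ⟨p, hp⟩ : (X \ {a, b}).Nonempty := by
    rw [← card_pos]
    have := le_card_sdiff {a, b} X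
    have : #({a, b} : Finset α) ≤ 2 := card_le_two
    omega
  simp only [mem_sdiff, mem_insert, mem_singleton, not_or] at hp
  obtain ⟨hpX, hpa, hpb⟩ := hp
  exact ⟨p, hpX, not_isAnticlique_iff.mpr
    ⟨a, mem_erase.mpr ⟨Ne.symm hpa, ha⟩, b, mem_erase.mpr ⟨Ne.symm hpb, hb⟩, hab, habE⟩⟩

theorem mem_up_of_erase_mem {p : α} (hp : p ∈ X) (hXV : X ⊆ V) (hH : X.erase p ∈ H) :
    X ∈ up V H :=
  Or.inr ⟨X.erase p, hH, p, hXV hp, notMem_erase p X, (insert_erase hp).symm⟩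

theorem mem_truncation :
    X ∈ truncation V E k ↔ X ⊆ V ∧ #X ≤ k ∧ (#X = k → ¬IsAnticlique E X) := by
  simp only [truncation, Set.mem_sdiff, Set.mem_ofPred_eq, not_and, and_assoc]

theorem up_truncation_subset : up V (truncation V E k) ⊆ truncation V E (k + 1) := by
  rintro _ (hX | ⟨I, hI, p, hpV, hpI, rfl⟩)
  · obtain ⟨hXV, hcard, -⟩ := mem_truncation.mp hX
    exact mem_truncation.mpr ⟨hXV, by omega, by omega⟩
  · obtain ⟨hIV, hcard, hI⟩ := mem_truncation.mp hI
    have hins : #(insert p I) = #I + 1 := card_insert_of_notMem hpI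
    refine mem_truncation.mpr ⟨insert_subset hpV hIV, by omega, fun hk hanti ↦ ?_⟩
    exact hI (by omega) (hanti.mono (subset_insert p I))

theorem truncation_succ_subset_up (hk : 2 ≤ k) :
    truncation V E (k + 1) ⊆ up V (truncation V E k) := by
  intro X hX
  obtain ⟨hXV, hcard, hX⟩ := mem_truncation.mp hX
  rcases Nat.lt_or_ge #X k with hlt | hge
  · exact Or.inl (mem_truncation.mpr ⟨hXV, hlt.le, by omega⟩)
  rcases hge.eq_or_lt with heq | hgt
  · by_cases hanti : IsAnticlique E X
    · obtain ⟨p, hp⟩ : X.Nonempty := card_pos.mp (by omega)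
      refine mem_up_of_erase_mem hp hXV (mem_truncation.mpr ?_)
      rw [card_erase_of_mem hp]
      exact ⟨(erase_subset p X).trans hXV, by omega, by omega⟩
    · exact Or.inl (mem_truncation.mpr ⟨hXV, heq.ge, fun _ ↦ hanti⟩)
  · obtain ⟨p, hp, hanti⟩ := exists_not_isAnticlique_erase (hX (by omega)) (by omega)
    refine mem_up_of_erase_mem hp hXV (mem_truncation.mpr ?_)
    rw [card_erase_of_mem hp]
    exact ⟨(erase_subset p X).trans hXV, by omega, fun _ ↦ hanti⟩

theorem up_truncation (hk : 2 ≤ k) : up V (truncation V E k) = truncation V E (k + 1) :=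
  up_truncation_subset.antisymm (truncation_succ_subset_up hk)

theorem iterate_up_truncation (hk : 2 ≤ k) (m : ℕ) :
    (up V)^[m] (truncation V E k) = truncation V E (k + m) := by
  induction m with
  | zero => rfl
  | succ m ih =>
    rw [Function.iterate_succ_apply', ih, up_truncation (by omega), Nat.add_assoc]

theorem eq_truncation_two (hV : V.Nonempty) (hE : IsComplex V E) (hdim : ∀ X ∈ E, #X ≤ 2) :
    E = truncation V E 2 := by
  obtain ⟨hEV, hEsingleton, hEdown⟩ := hE
  ext X
  refine ⟨fun hX ↦ mem_truncation.mpr ⟨hEV X hX, hdim X hX, fun h2 hanti ↦ ?_⟩, fun hX ↦ ?_⟩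
  · obtain ⟨a, b, hab, rfl⟩ := card_eq_two.mp h2
    exact hanti a (mem_insert_self a {b}) b (mem_insert_of_mem (mem_singleton_self b)) hab hX
  obtain ⟨hXV, hcard, hX⟩ := mem_truncation.mp hX
  rcases hcard.eq_or_lt with h2 | hlt
  · obtain ⟨a, ha, b, hb, hab, habE⟩ := not_isAnticlique_iff.mp (hX h2)
    have hsub : {a, b} ⊆ X := insert_subset ha (singleton_subset_iff.mpr hb)
    rwa [← eq_of_subset_of_card_le hsub (by rw [h2, card_pair hab])]
  · obtain ⟨v, hv, hXv⟩ : ∃ v ∈ V, X ⊆ {v} := by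
      rcases X.eq_empty_or_nonempty with rfl | ⟨a, ha⟩
      · exact hV.imp fun v hv ↦ ⟨hv, empty_subset _⟩
      · exact ⟨a, hXV ha, fun b hb ↦ mem_singleton.mpr (card_le_one.mp (by omega) b hb a ha)⟩
    exact hEdown {v} (hEsingleton v hv) X hXv

end

/-- For a graph `Γ = (V,E)` (a simplicial complex of dimension at most 1), the
`m`-th iterate of the up operator has as faces exactly the subsets of `V` of size
at most `m+2`, except those of size exactly `m+2` which are anticliques of `Γ`. -/
theorem iterate_up_graph (V : Finset α) (E : Set (Finset α)) (hV : V.Nonempty)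
    (hE : IsComplex V E) (hdim : ∀ X ∈ E, X.card ≤ 2) (m : ℕ) :
    (up V)^[m] E =
      {X : Finset α | X ⊆ V ∧ X.card ≤ m + 2} \
        {X : Finset α | X.card = m + 2 ∧
          ∀ a ∈ X, ∀ b ∈ X, a ≠ b → ({a, b} : Finset α) ∉ E} := by
  conv_lhs => rw [eq_truncation_two hV hE hdim]
  rw [iterate_up_truncation le_rfl, Nat.add_comm]
  rfl
end

section
/- Let (V,H) be a connected boolean representable simplicial complex of dimension at most 2 containing all singletons. Then its counting function α, given by α(n) = |H ∩ P_n(V)|, is unimodal. -/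
variable {α : Type*} [DecidableEq α]

/-- A flat of `(V,H)`: `F ⊆ V` such that for every face `X ⊆ F` and every
`p ∈ V \ F`, `X ∪ {p}` is a face. -/
def IsFlat (V : Finset α) (H : Set (Finset α)) (F : Finset α) : Prop :=
  F ⊆ V ∧ ∀ X ∈ H, X ⊆ F → ∀ p ∈ V, p ∉ F → insert p X ∈ H

/-- `z` belongs to the closure of `X` in the lattice of flats of `(V,H)`. -/
def inCl (V : Finset α) (H : Set (Finset α)) (X : Finset α) (z : α) : Prop :=
  ∀ F : Finset α, IsFlat V H F → X ⊆ F → z ∈ F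

/-- Boolean representable simplicial complex, via the standard criterion:
every nonempty face `X` has a point `x` outside the closure of `X \ {x}`. -/
def IsBRSC (V : Finset α) (H : Set (Finset α)) : Prop :=
  IsComplex V H ∧ ∀ X ∈ H, X.Nonempty → ∃ x ∈ X, ¬ inCl V H (X.erase x) x

/-- Unimodality of a function `ℕ → ℕ`. -/
def Unimodal (f : ℕ → ℕ) : Prop :=
  ∃ m : ℕ, (∀ i j : ℕ, i < j → j ≤ m → f i ≤ f j) ∧
    (∀ i j : ℕ, m ≤ i → i < j → f j ≤ f i)

/-
Write `f n` for the number of faces of size `n`. Only `f 0, …, f 3` can be nonzero, and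
`f 0 ≤ 1 ≤ |V| = f 1`, so unimodality can only fail through a valley `f 1 > f 2 < f 3`.
But if `f 3 > 0` there is a triangle, so the 1-skeleton is a connected graph on `V` that is
not a tree; it therefore has at least `|V|` edges, i.e. `f 1 ≤ f 2`.
-/

theorem unimodal_of_le_succ {f : ℕ → ℕ} (m : ℕ) (hmono : ∀ n < m, f n ≤ f (n + 1))
    (hanti : ∀ n, m ≤ n → f (n + 1) ≤ f n) : Unimodal f := by
  have hup : MonotoneOn f (Set.Iic m) := monotoneOn_of_le_succ Set.ordConnected_Iic
    fun n _ _ hn => by simpa using hmono n (Order.succ_le_iff.mp hn)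
  have hdown : AntitoneOn f (Set.Ici m) := antitoneOn_of_succ_le Set.ordConnected_Ici
    fun n _ hn _ => by simpa using hanti n hn
  exact ⟨m, fun i j hij hj => hup (hij.le.trans hj) hj hij.le,
    fun i j hi hij => hdown hi (hi.trans hij.le) hij.le⟩

theorem unimodal_of_eq_zero_of_four_le {f : ℕ → ℕ} (hzero : ∀ n, 4 ≤ n → f n = 0)
    (h01 : f 0 ≤ f 1) (hvalley : f 1 ≤ f 2 ∨ f 3 ≤ f 2) : Unimodal f := by
  have hanti : ∀ n, 3 ≤ n → f (n + 1) ≤ f n := fun n hn => by simp [hzero (n + 1) (by omega)]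
  obtain ⟨m, hm⟩ : ∃ m, (f 1 ≤ f 2 ∧ f 3 ≤ f 2 ∧ m = 2) ∨ (f 1 ≤ f 2 ∧ f 2 < f 3 ∧ m = 3) ∨
      (f 2 < f 1 ∧ f 3 ≤ f 2 ∧ m = 1) := by
    rcases le_or_gt (f 1) (f 2) with h12 | h21
    · rcases le_or_gt (f 3) (f 2) with h32 | h23
      · exact ⟨2, by omega⟩
      · exact ⟨3, by omega⟩
    · exact ⟨1, by omega⟩
  refine unimodal_of_le_succ m (fun n hn => ?_) fun n hn => ?_
  · have : n < 3 := by omega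
    interval_cases n <;> simp only [zero_add, Nat.reduceAdd] <;> omega
  · rcases Nat.lt_or_ge n 3 with h | h
    · interval_cases n <;> simp only [zero_add, Nat.reduceAdd] <;> omega
    · exact hanti n h

theorem Sym2.toFinset_injective : Function.Injective (Sym2.toFinset : Sym2 α → Finset α) :=
  fun z z' h => Sym2.ext fun x => by rw [← Sym2.mem_toFinset, h, Sym2.mem_toFinset]

namespace SimpleGraph
variable {W : Type*} [Finite W] {G : SimpleGraph W}

theorem Connected.card_vert_le_card_edgeSet_of_not_isAcyclic (hG : G.Connected)
    (hcyc : ¬ G.IsAcyclic) : Nat.card W ≤ Nat.card G.edgeSet := by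
  have hnot_tree : Nat.card G.edgeSet + 1 ≠ Nat.card W := fun h =>
    hcyc (isTree_iff_connected_and_card.mpr ⟨hG, h⟩).isAcyclic
  have := hG.card_vert_le_card_edgeSet_add_one
  omega

theorem Connected.card_vert_le_card_edgeSet_of_adj_of_adj_of_adj (hG : G.Connected) {a b c : W}
    (hab : G.Adj a b) (hac : G.Adj a c) (hbc : G.Adj b c) : Nat.card W ≤ Nat.card G.edgeSet := by
  classical
  exact hG.card_vert_le_card_edgeSet_of_not_isAcyclic fun hacyc =>
    hacyc.cliqueFree le_rfl {a, b, c} (is3Clique_triple_iff.mpr ⟨hab, hac, hbc⟩)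

end SimpleGraph

section FaceCount
variable {β : Type*}

noncomputable def faceCount (H : Set (Finset β)) (n : ℕ) : ℕ :=
  {X : Finset β | X ∈ H ∧ X.card = n}.ncard

theorem faceCount_zero_le_one (H : Set (Finset β)) : faceCount H 0 ≤ 1 := by
  refine (Set.ncard_le_ncard (t := {∅}) ?_ (Set.finite_singleton _)).trans_eq
    (Set.ncard_singleton _)
  rintro X ⟨-, hX⟩
  exact Finset.card_eq_zero.mp hX

theorem faceCount_one {V : Finset β} {H : Set (Finset β)} (hsub : ∀ X ∈ H, X ⊆ V)
    (hsing : ∀ v ∈ V, {v} ∈ H) : faceCount H 1 = V.card := by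
  have hsingletons : {X : Finset β | X ∈ H ∧ X.card = 1} = (fun v => {v}) '' ↑V := by
    ext X
    simp only [Set.mem_ofPred_eq, Set.mem_image, Finset.mem_coe, Finset.card_eq_one]
    constructor
    · rintro ⟨hX, v, rfl⟩
      exact ⟨v, hsub _ hX (Finset.mem_singleton_self v), rfl⟩
    · rintro ⟨v, hv, rfl⟩
      exact ⟨hsing v hv, v, rfl⟩
  rw [faceCount, hsingletons, Set.ncard_image_of_injective _ Finset.singleton_injective,
    Set.ncard_coe_finset]

theorem faceCount_eq_zero_of_lt {H : Set (Finset β)} {d n : ℕ} (hdim : ∀ X ∈ H, X.card ≤ d)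
    (hn : d < n) : faceCount H n = 0 := by
  have hempty : {X : Finset β | X ∈ H ∧ X.card = n} = ∅ :=
    Set.eq_empty_of_forall_notMem fun X ⟨hX, hcard⟩ => (hdim X hX).not_gt (hcard ▸ hn)
  rw [faceCount, hempty, Set.ncard_empty]

end FaceCount

def oneSkeleton (V : Finset α) (H : Set (Finset α)) : SimpleGraph V where
  Adj x y := x ≠ y ∧ ({x.1, y.1} : Finset α) ∈ H
  symm := ⟨fun x y h => ⟨h.1.symm, Finset.pair_comm x.1 y.1 ▸ h.2⟩⟩
  loopless := ⟨fun _ h => h.1 rfl⟩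

section OneSkeleton
variable {V : Finset α} {H : Set (Finset α)}

theorem oneSkeleton_reachable_of_reflTransGen (hsub : ∀ X ∈ H, X ⊆ V) {x y : α}
    (hxy : Relation.ReflTransGen (fun x y => x ≠ y ∧ ({x, y} : Finset α) ∈ H) x y)
    (hx : x ∈ V) (hy : y ∈ V) : (oneSkeleton V H).Reachable ⟨x, hx⟩ ⟨y, hy⟩ := by
  induction hxy with
  | refl => rfl
  | tail _ hzy ih =>
    have hz := hsub _ hzy.2 (Finset.mem_insert_self _ _)
    exact (ih hz).trans
      (SimpleGraph.Adj.reachable ⟨fun h => hzy.1 congr(Subtype.val $h), hzy.2⟩)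

theorem oneSkeleton_connected (hsub : ∀ X ∈ H, X ⊆ V)
    (hconn : ∀ a ∈ V, ∀ b ∈ V,
      Relation.ReflTransGen (fun x y => x ≠ y ∧ ({x, y} : Finset α) ∈ H) a b)
    {a : α} (ha : a ∈ V) : (oneSkeleton V H).Connected :=
  have : Nonempty V := ⟨⟨a, ha⟩⟩
  .mk fun ⟨x, hx⟩ ⟨y, hy⟩ =>
    oneSkeleton_reachable_of_reflTransGen hsub (hconn x hx y hy) hx hy

theorem card_edgeSet_oneSkeleton_le_faceCount_two (hsub : ∀ X ∈ H, X ⊆ V) :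
    Nat.card (oneSkeleton V H).edgeSet ≤ faceCount H 2 := by
  rw [Nat.card_coe_set_eq]
  refine Set.ncard_le_ncard_of_injOn (fun e => (e.map Subtype.val).toFinset) ?_ ?_ ?_
  · intro e he
    induction e using Sym2.ind with
    | h x y =>
      rw [SimpleGraph.mem_edgeSet] at he
      rw [Sym2.map_mk, Sym2.toFinset_mk_eq]
      exact ⟨he.2, Finset.card_pair (Subtype.val_injective.ne he.1)⟩
  · exact fun e _ e' _ h =>
      Sym2.map.injective Subtype.val_injective (Sym2.toFinset_injective h)
  · exact V.powerset.finite_toSet.subset fun X hX =>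
      Finset.mem_coe.mpr (Finset.mem_powerset.mpr (hsub X hX.1))

theorem card_le_faceCount_two_of_faceCount_three_ne_zero (hsub : ∀ X ∈ H, X ⊆ V)
    (hdown : ∀ X ∈ H, ∀ Y : Finset α, Y ⊆ X → Y ∈ H)
    (hconn : ∀ a ∈ V, ∀ b ∈ V,
      Relation.ReflTransGen (fun x y => x ≠ y ∧ ({x, y} : Finset α) ∈ H) a b)
    (htri : faceCount H 3 ≠ 0) : V.card ≤ faceCount H 2 := by
  obtain ⟨X, hX, hcard⟩ := Set.nonempty_of_ncard_ne_zero htri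
  obtain ⟨a, b, c, hab, hac, hbc, rfl⟩ := Finset.card_eq_three.mp hcard
  have hV : ∀ x ∈ ({a, b, c} : Finset α), x ∈ V := hsub _ hX
  have hadj : ∀ x y, (hx : x ∈ ({a, b, c} : Finset α)) → (hy : y ∈ ({a, b, c} : Finset α)) →
      x ≠ y → (oneSkeleton V H).Adj ⟨x, hV x hx⟩ ⟨y, hV y hy⟩ := fun x y hx hy hxy =>
    ⟨fun h => hxy congr(Subtype.val $h),
      hdown _ hX _ (Finset.insert_subset hx (Finset.singleton_subset_iff.mpr hy))⟩
  have hconnected := oneSkeleton_connected hsub hconn (hV a (by simp))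
  calc V.card = Nat.card V := (Nat.card_eq_finsetCard V).symm
    _ ≤ Nat.card (oneSkeleton V H).edgeSet :=
      hconnected.card_vert_le_card_edgeSet_of_adj_of_adj_of_adj
        (hadj a b (by simp) (by simp) hab) (hadj a c (by simp) (by simp) hac)
        (hadj b c (by simp) (by simp) hbc)
    _ ≤ faceCount H 2 := card_edgeSet_oneSkeleton_le_faceCount_two hsub

end OneSkeleton

/-- The counting function of a connected boolean representable simplicial complex
of dimension at most 2 is unimodal. -/
theorem unimodal_counting_of_connected_dim_le_two (V : Finset α)
    (H : Set (Finset α)) (hV : V.Nonempty) (hH : IsBRSC V H)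
    (hdim : ∀ X ∈ H, X.card ≤ 3)
    (hconn : ∀ a ∈ V, ∀ b ∈ V,
      Relation.ReflTransGen (fun x y => x ≠ y ∧ ({x, y} : Finset α) ∈ H) a b) :
    Unimodal (fun n => {X : Finset α | X ∈ H ∧ X.card = n}.ncard) := by
  obtain ⟨⟨hsub, hsing, hdown⟩, -⟩ := hH
  have hcount_one : faceCount H 1 = V.card := faceCount_one hsub hsing
  refine unimodal_of_eq_zero_of_four_le (f := faceCount H)
    (fun n hn => faceCount_eq_zero_of_lt hdim hn) ?_ ?_
  · rw [hcount_one]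
    exact (faceCount_zero_le_one H).trans hV.card_pos
  · by_cases htri : faceCount H 3 = 0
    · exact .inr (htri ▸ Nat.zero_le _)
    · exact .inl (hcount_one ▸
        card_le_faceCount_two_of_faceCount_three_ne_zero hsub hdown hconn htri)
end

section
/- Let (V,H) be a paving simplicial complex of dimension d ≥ 2. Every flat F of (V,H) with d ≤ |F| < |V| is a maximal long hyperplane, i.e. F contains no facet of (V,H) and every strictly larger proper subset of V containing F contains a facet. -/
variable {α : Type*} [DecidableEq α]

/-- A facet: a maximal face. -/
def IsFacet (H : Set (Finset α)) (B : Finset α) : Prop :=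
  B ∈ H ∧ ∀ C ∈ H, B ⊆ C → C = B

/-- A facet inside `F` could be extended by a vertex outside `F`. -/
theorem IsFlat.not_subset_of_isFacet {V F B : Finset α} {H : Set (Finset α)}
    (hF : IsFlat V H F) (hFV : F ≠ V) (hB : IsFacet H B) : ¬ B ⊆ F := by
  intro hBF
  obtain ⟨p, hpV, hpF⟩ := Finset.exists_of_ssubset (hF.1.ssubset_of_ne hFV)
  have hpB : insert p B = B := hB.2 _ (hF.2 B hB.1 hBF p hpV hpF) (Finset.subset_insert p B)
  exact hpF (hBF (hpB ▸ Finset.mem_insert_self p B))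

omit [DecidableEq α] in
theorem isFacet_of_card_eq {H : Set (Finset α)} {d : ℕ} (hbig : ∀ X ∈ H, X.card ≤ d + 1)
    {B : Finset α} (hB : B ∈ H) (hcard : B.card = d + 1) : IsFacet H B :=
  ⟨hB, fun C hC hBC => (Finset.eq_of_subset_of_card_le hBC (hcard ▸ hbig C hC)).symm⟩

/-- A `d`-subset of `F` is a face, the flat property adds `q` to it, and size `d + 1` is
maximal. -/
theorem IsFlat.exists_isFacet_subset_insert {V F : Finset α} {H : Set (Finset α)} {d : ℕ}
    (hH : IsPav V H d) (hF : IsFlat V H F) (hdF : d ≤ F.card) {q : α} (hqV : q ∈ V)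
    (hqF : q ∉ F) : ∃ B, IsFacet H B ∧ B ⊆ insert q F := by
  obtain ⟨-, hsmall, hbig, -⟩ := hH
  obtain ⟨X, hXF, hXcard⟩ := Finset.exists_subset_card_eq hdF
  have hXH : X ∈ H := hsmall X (hXF.trans hF.1) hXcard.le
  have hqX : q ∉ X := fun h => hqF (hXF h)
  refine ⟨insert q X, isFacet_of_card_eq hbig (hF.2 X hXH hXF q hqV hqF) ?_,
    Finset.insert_subset_insert q hXF⟩
  rw [Finset.card_insert_of_notMem hqX, hXcard]

theorem flat_is_maximal_long_hyperplane_general (V : Finset α) (H : Set (Finset α))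
    (d : ℕ) (hH : IsPav V H d)
    (F : Finset α) (hF : IsFlat V H F) (h1 : d ≤ F.card) (h2 : F.card < V.card) :
    (¬ ∃ B : Finset α, IsFacet H B ∧ B ⊆ F) ∧
      ∀ G : Finset α, F ⊂ G → G ⊆ V → G ≠ V →
        ∃ B : Finset α, IsFacet H B ∧ B ⊆ G := by
  constructor
  · rintro ⟨B, hB, hBF⟩
    exact hF.not_subset_of_isFacet (by rintro rfl; exact h2.false) hB hBF
  · intro G hFG hGV _
    obtain ⟨q, hqG, hqF⟩ := Finset.exists_of_ssubset hFG
    obtain ⟨B, hB, hBqF⟩ := hF.exists_isFacet_subset_insert hH h1 (hGV hqG) hqF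
    exact ⟨B, hB, hBqF.trans (Finset.insert_subset hqG hFG.subset)⟩

/-- In a paving complex of dimension `d ≥ 2`, every flat `F` with
`d ≤ |F| < |V|` is a maximal long hyperplane: `F` contains no facet, and every
strictly larger proper subset of `V` containing `F` contains a facet. -/
theorem flat_is_maximal_long_hyperplane (V : Finset α) (H : Set (Finset α))
    (d : ℕ) (hd : 2 ≤ d) (hH : IsPav V H d)
    (F : Finset α) (hF : IsFlat V H F) (h1 : d ≤ F.card) (h2 : F.card < V.card) :
    (¬ ∃ B : Finset α, IsFacet H B ∧ B ⊆ F) ∧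
      ∀ G : Finset α, F ⊂ G → G ⊆ V → G ≠ V →
        ∃ B : Finset α, IsFacet H B ∧ B ⊆ G :=
  flat_is_maximal_long_hyperplane_general V H d hH F hF h1 h2
end

section
/- Let (V,H) ∈ Pav(d) with d ≥ 2 and suppose (V,H) is pure (all facets have size d+1). Then every maximal long hyperplane L that is not a flat satisfies: there exists another maximal long hyperplane L' ≠ L with |L ∩ L'| ≥ d. -/
variable {α : Type*} [DecidableEq α]

/-- A long hyperplane: a subset of `V` of size at least `d+1` containing no facet. -/
def LongHyp (V : Finset α) (H : Set (Finset α)) (d : ℕ) (X : Finset α) : Prop :=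
  X ⊆ V ∧ d + 1 ≤ X.card ∧ ¬ ∃ B : Finset α, IsFacet H B ∧ B ⊆ X

/-- A maximal long hyperplane. -/
def MaxLongHyp (V : Finset α) (H : Set (Finset α)) (d : ℕ) (X : Finset α) : Prop :=
  LongHyp V H d X ∧ ∀ Y : Finset α, LongHyp V H d Y → X ⊆ Y → Y = X

/-!
If `L` is not a flat, some face `X ⊆ L` and vertex `p ∉ L` have `insert p X ∉ H`. All sets of
size at most `d` are faces and `L` contains no facet, so `|X| = d` and `insert p X` is a
non-face of size `d + 1`; by purity it contains no facet, i.e. it is a long hyperplane. Any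
maximal long hyperplane `L'` containing it differs from `L` (it contains `p`) and meets `L` in
at least `X`.
-/

section PavingComplex

variable {β : Type*} {V : Finset β} {H : Set (Finset β)} {d : ℕ}

theorem isFacet_of_card_eq_s11 (hbound : ∀ X ∈ H, X.card ≤ d + 1) {X : Finset β} (hX : X ∈ H)
    (hcard : X.card = d + 1) : IsFacet H X :=
  ⟨hX, fun C hC hXC => (Finset.eq_of_subset_of_card_le hXC (hcard ▸ hbound C hC)).symm⟩

theorem LongHyp.card_le_of_mem_of_subset (hbound : ∀ X ∈ H, X.card ≤ d + 1) {L X : Finset β}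
    (hL : LongHyp V H d L) (hX : X ∈ H) (hXL : X ⊆ L) : X.card ≤ d := by
  by_contra! hlt
  exact hL.2.2 ⟨X, isFacet_of_card_eq_s11 hbound hX (le_antisymm (hbound X hX) hlt), hXL⟩

theorem longHyp_of_card_eq_of_notMem (hpure : ∀ B : Finset β, IsFacet H B → B.card = d + 1)
    {Y : Finset β} (hYV : Y ⊆ V) (hcard : Y.card = d + 1) (hY : Y ∉ H) : LongHyp V H d Y := by
  refine ⟨hYV, hcard.ge, ?_⟩
  rintro ⟨B, hB, hBY⟩
  have hBeq : B = Y := Finset.eq_of_subset_of_card_le hBY (by rw [hcard, hpure B hB])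
  exact hY (hBeq ▸ hB.1)

theorem LongHyp.exists_maxLongHyp_superset {Y : Finset β} (hY : LongHyp V H d Y) :
    ∃ L, MaxLongHyp V H d L ∧ Y ⊆ L := by
  have hfin : {Z | LongHyp V H d Z}.Finite :=
    (V.powerset.finite_toSet).subset fun Z hZ => Finset.mem_powerset.mpr hZ.1
  obtain ⟨L, hYL, hL, hLmax⟩ := hfin.exists_le_maximal hY
  exact ⟨L, ⟨hL, fun Z hZ hLZ => (hLmax hZ hLZ).antisymm hLZ⟩, hYL⟩

theorem LongHyp.exists_longHyp_insert_of_not_isFlat [DecidableEq β] (hH : IsPav V H d)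
    (hpure : ∀ B : Finset β, IsFacet H B → B.card = d + 1) {L : Finset β}
    (hL : LongHyp V H d L) (hnf : ¬ IsFlat V H L) :
    ∃ X ⊆ L, X.card = d ∧ ∃ p ∉ L, LongHyp V H d (insert p X) := by
  obtain ⟨hcplx, hsmall, hbound, -⟩ := hH
  simp only [IsFlat, not_and, not_forall] at hnf
  obtain ⟨X, hXH, hXL, p, hpV, hpL, hYH⟩ := hnf hL.1
  have hpX : p ∉ X := fun h => hpL (hXL h)
  have hYV : insert p X ⊆ V := Finset.insert_subset hpV (hcplx.1 X hXH)
  have hXcard : X.card = d := by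
    refine le_antisymm (hL.card_le_of_mem_of_subset hbound hXH hXL) ?_
    by_contra! hlt
    exact hYH (hsmall _ hYV (by rw [Finset.card_insert_of_notMem hpX]; omega))
  refine ⟨X, hXL, hXcard, p, hpL, longHyp_of_card_eq_of_notMem hpure hYV ?_ hYH⟩
  rw [Finset.card_insert_of_notMem hpX, hXcard]

end PavingComplex

theorem pure_maximal_long_hyperplane_meets_general (V : Finset α) (H : Set (Finset α))
    (d : ℕ) (hH : IsPav V H d)
    (hpure : ∀ B : Finset α, IsFacet H B → B.card = d + 1)
    (L : Finset α) (hL : MaxLongHyp V H d L) (hnf : ¬ IsFlat V H L) :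
    ∃ L' : Finset α, MaxLongHyp V H d L' ∧ L' ≠ L ∧ d ≤ (L ∩ L').card := by
  obtain ⟨X, hXL, hXcard, p, hpL, hY⟩ := hL.1.exists_longHyp_insert_of_not_isFlat hH hpure hnf
  obtain ⟨L', hL', hYL'⟩ := hY.exists_maxLongHyp_superset
  refine ⟨L', hL', fun h => hpL (h ▸ hYL' (Finset.mem_insert_self p X)), ?_⟩
  calc d = X.card := hXcard.symm
    _ ≤ (L ∩ L').card :=
      Finset.card_le_card (Finset.subset_inter hXL ((Finset.subset_insert p X).trans hYL'))

/-- In a pure paving complex of dimension `d ≥ 2`, every maximal long hyperplane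
`L` which is not a flat meets some other maximal long hyperplane in at least `d`
points. -/
theorem pure_maximal_long_hyperplane_meets (V : Finset α) (H : Set (Finset α))
    (d : ℕ) (hd : 2 ≤ d) (hH : IsPav V H d)
    (hpure : ∀ B : Finset α, IsFacet H B → B.card = d + 1)
    (L : Finset α) (hL : MaxLongHyp V H d L) (hnf : ¬ IsFlat V H L) :
    ∃ L' : Finset α, MaxLongHyp V H d L' ∧ L' ≠ L ∧ d ≤ (L ∩ L').card :=
  pure_maximal_long_hyperplane_meets_general V H d hH hpure L hL hnf
end

section
/- Every truncated boolean representable simplicial complex of dimension 1 is boolean representable; equivalently, if (V,H) is a complex of dimension 1 such that every 2-element face {a,c} ∈ H is 'separated' by some T ∈ T(H) with |T ∩ {a,c}| = 1, then the graph on V whose edges are the non-faces {a,b} ∉ H has all connected components cliques. -/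
variable {α : Type*} [DecidableEq α]

/-- For a dimension-1 complex, `T(H)` consists of the `T ⊆ V` such that for every
`x ∈ T` and `p ∈ V \ T`, `{x,p} ∈ H`. -/
def TofH (V : Finset α) (H : Set (Finset α)) : Set (Finset α) :=
  {T : Finset α | T ⊆ V ∧ ∀ x ∈ T, ∀ p ∈ V, p ∉ T → ({x, p} : Finset α) ∈ H}

/-! A set `T ∈ T(H)` containing `a` but not `c` forces every vertex `b` to span a face with `a`
or with `c`. Hence two non-faces `{a,b}`, `{b,c}` leave no `T` to separate `a` from `c`, so by the
separation hypothesis `{a,c}` is a non-face too: adjacency in `Γ(V,H)` is transitive on distinct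
vertices, and every component is a clique. -/

section Separation

variable {V : Finset α} {H : Set (Finset α)}

theorem pair_mem_or_pair_mem_of_mem_TofH {T : Finset α} (hT : T ∈ TofH V H) {a b c : α}
    (haT : a ∈ T) (hb : b ∈ V) (hc : c ∈ V) (hcT : c ∉ T) :
    ({a, b} : Finset α) ∈ H ∨ ({b, c} : Finset α) ∈ H := by
  by_cases hbT : b ∈ T
  · exact Or.inr (hT.2 b hbT c hc hcT)
  · exact Or.inl (hT.2 a haT b hb hbT)

theorem pair_notMem_trans
    (hsep : ∀ a ∈ V, ∀ c ∈ V, a ≠ c → ({a, c} : Finset α) ∈ H →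
      ∃ T ∈ TofH V H, (a ∈ T ∧ c ∉ T) ∨ (a ∉ T ∧ c ∈ T))
    {a b c : α} (ha : a ∈ V) (hb : b ∈ V) (hc : c ∈ V) (hac : a ≠ c)
    (hab : ({a, b} : Finset α) ∉ H) (hbc : ({b, c} : Finset α) ∉ H) :
    ({a, c} : Finset α) ∉ H := by
  intro hacH
  obtain ⟨T, hT, ⟨haT, hcT⟩ | ⟨haT, hcT⟩⟩ := hsep a ha c hc hac hacH
  · exact (pair_mem_or_pair_mem_of_mem_TofH hT haT hb hc hcT).elim hab hbc
  · rw [Finset.pair_comm] at hab hbc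
    exact (pair_mem_or_pair_mem_of_mem_TofH hT hcT hb ha haT).elim hbc hab

end Separation

theorem tbrsc_dim1_boolean_representable_general (V : Finset α) (H : Set (Finset α))
    (hsep : ∀ a ∈ V, ∀ c ∈ V, a ≠ c → ({a, c} : Finset α) ∈ H →
      ∃ T ∈ TofH V H, (a ∈ T ∧ c ∉ T) ∨ (a ∉ T ∧ c ∈ T)) :
    ∀ a b : α,
      Relation.ReflTransGen
        (fun x y => x ∈ V ∧ y ∈ V ∧ x ≠ y ∧ ({x, y} : Finset α) ∉ H) a b →
      a ≠ b → a ∈ V ∧ b ∈ V ∧ a ≠ b ∧ ({a, b} : Finset α) ∉ H := by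
  intro a b hab
  induction hab with
  | refl => exact fun h => absurd rfl h
  | @tail b c _ hbc ih =>
    intro hac
    obtain ⟨hb, hc, -, hbcH⟩ := hbc
    by_cases hab_eq : a = b
    · subst hab_eq
      exact ⟨hb, hc, hac, hbcH⟩
    · obtain ⟨ha, -, -, habH⟩ := ih hab_eq
      exact ⟨ha, hc, hac, pair_notMem_trans hsep ha hb hc hac habH hbcH⟩

/-- Every truncated boolean representable complex of dimension 1 is boolean
representable: if every 2-element face `{a,c}` of `(V,H)` is separated by some
`T ∈ T(H)` with `|T ∩ {a,c}| = 1`, then the connected components of the graph on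
`V` with edges `P_2(V) \ H` are cliques (vertices in the same component are
adjacent). -/
theorem tbrsc_dim1_boolean_representable (V : Finset α) (H : Set (Finset α))
    (hV : V.Nonempty) (hH : IsComplex V H) (hdim : ∀ X ∈ H, X.card ≤ 2)
    (hne : ∃ X ∈ H, X.card = 2)
    (hsep : ∀ a ∈ V, ∀ c ∈ V, a ≠ c → ({a, c} : Finset α) ∈ H →
      ∃ T ∈ TofH V H, (a ∈ T ∧ c ∉ T) ∨ (a ∉ T ∧ c ∈ T)) :
    ∀ a b : α,
      Relation.ReflTransGen
        (fun x y => x ∈ V ∧ y ∈ V ∧ x ≠ y ∧ ({x, y} : Finset α) ∉ H) a b →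
      a ≠ b → a ∈ V ∧ b ∈ V ∧ a ≠ b ∧ ({a, b} : Finset α) ∉ H :=
  tbrsc_dim1_boolean_representable_general V H hsep
end

section
/- Let d ≥ 2 and let L ⊆ V with d ≤ |L| < |V| − 1. Then the flats of the complex (V, B_d(V,L)) are exactly P_{≤d−1}(V) ∪ {L, V}. If |L| = |V| − 1, the flats are P_{≤d−1}(V) ∪ {L, V} ∪ (P_d(V) \ P_d(L)). -/
variable {α : Type*} [DecidableEq α]

/-- `B_d(V,L) = P_{≤d}(V) ∪ { X ∈ P_{d+1}(V) : |X ∩ L| = d }`. -/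
def Bd (V : Finset α) (d : ℕ) (L : Finset α) : Set (Finset α) :=
  {X : Finset α | X ⊆ V ∧ (X.card ≤ d ∨ (X.card = d + 1 ∧ (X ∩ L).card = d))}

/-! Let `F ≠ V` be a flat of `B_d(V,L)`, `X ⊆ F` with `|X| = d` and `q ∈ V \ F`. Then `X ∪ {q}` is a
face with `d + 1` elements, so it meets `L` in exactly `d` points: `|X \ L| = [q ∈ L]`. Thus all
`d`-subsets of `F` miss `L` in the same number (`0` or `1`) of points. When `|F| > d ≥ 2` this is
only possible for `F ⊆ L`, and then `q ∉ L` for every `q ∉ F`, so `F = L`. When `|F| = d` and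
`F ⊄ L`, every `q ∈ V \ L` must lie in `F`, so `V \ L = F \ L` is a single point. -/

open Finset

variable {V L F X : Finset α} {d : ℕ}

theorem isFlat_self (H : Set (Finset α)) : IsFlat V H V :=
  ⟨subset_rfl, fun _ _ _ _ hp hpV => absurd hp hpV⟩

theorem insert_mem_Bd_of_card_lt {p : α} (hXV : X ⊆ V) (hpV : p ∈ V) (hX : X.card < d) :
    insert p X ∈ Bd V d L :=
  ⟨insert_subset hpV hXV, .inl ((card_insert_le p X).trans hX)⟩

theorem isFlat_Bd_of_card_lt (hFV : F ⊆ V) (hF : F.card < d) : IsFlat V (Bd V d L) F :=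
  ⟨hFV, fun _ _ hXF _ hpV _ =>
    insert_mem_Bd_of_card_lt (hXF.trans hFV) hpV ((card_le_card hXF).trans_lt hF)⟩

theorem isFlat_Bd_right (hLV : L ⊆ V) : IsFlat V (Bd V d L) L := by
  refine ⟨hLV, fun X ⟨_, hX⟩ hXL p hpV hpL => ?_⟩
  have hXL' : X ∩ L = X := inter_eq_left.mpr hXL
  have hcard : (insert p X).card = X.card + 1 := card_insert_of_notMem (fun h => hpL (hXL h))
  rw [hXL'] at hX
  rcases hX with hle | ⟨hX1, hXd⟩
  · rcases hle.lt_or_eq with hlt | rfl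
    · exact insert_mem_Bd_of_card_lt (hXL.trans hLV) hpV hlt
    · exact ⟨insert_subset hpV (hXL.trans hLV),
        .inr ⟨hcard, by rw [insert_inter_of_notMem hpL, hXL']⟩⟩
  · omega

theorem isFlat_Bd_of_card_eq (hVL : L.card + 1 = V.card) (hLV : L ⊆ V) (hFV : F ⊆ V)
    (hFd : F.card = d) (hFL : ¬ F ⊆ L) : IsFlat V (Bd V d L) F := by
  refine ⟨hFV, fun X _ hXF p hpV hpF => ?_⟩
  rcases (card_le_card hXF).lt_or_eq with hlt | hXd
  · exact insert_mem_Bd_of_card_lt (hXF.trans hFV) hpV (hFd ▸ hlt)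
  obtain rfl := eq_of_subset_of_card_le hXF hXd.ge
  have hVL1 : (V \ L).card = 1 := by rw [card_sdiff_of_subset hLV]; omega
  obtain ⟨z, hzX, hzL⟩ := not_subset.mp hFL
  have hsdiff : X \ L = V \ L :=
    eq_of_subset_of_card_le (sdiff_subset_sdiff hFV subset_rfl)
      (hVL1 ▸ card_pos.mpr ⟨z, mem_sdiff.mpr ⟨hzX, hzL⟩⟩)
  have hpL : p ∈ L := by
    by_contra hpL
    exact hpF (mem_sdiff.mp (hsdiff ▸ mem_sdiff.mpr ⟨hpV, hpL⟩ : p ∈ X \ L)).1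
  have hsplit := card_inter_add_card_sdiff X L
  rw [hsdiff, hVL1] at hsplit
  refine ⟨insert_subset hpV hFV, .inr ⟨by rw [card_insert_of_notMem hpF]; omega, ?_⟩⟩
  rw [insert_inter_of_mem hpL, card_insert_of_notMem (fun h => hpF (mem_inter.mp h).1)]
  omega

namespace IsFlat

variable {q : α}

theorem card_sdiff_eq (hF : IsFlat V (Bd V d L) F) (hXF : X ⊆ F) (hXd : X.card = d)
    (hqV : q ∈ V) (hqF : q ∉ F) : (X \ L).card = if q ∈ L then 1 else 0 := by
  have hqX : q ∉ X := fun h => hqF (hXF h)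
  obtain ⟨-, hsmall | ⟨-, hinter⟩⟩ := hF.2 X ⟨hXF.trans hF.1, .inl hXd.le⟩ hXF q hqV hqF
  · rw [card_insert_of_notMem hqX] at hsmall; omega
  have hsplit := card_inter_add_card_sdiff X L
  split_ifs with hqL
  · rw [insert_inter_of_mem hqL, card_insert_of_notMem (fun h => hqX (mem_inter.mp h).1)]
      at hinter
    omega
  · rw [insert_inter_of_notMem hqL] at hinter; omega

theorem notMem_of_subset (hF : IsFlat V (Bd V d L) F) (hXF : X ⊆ F) (hXL : X ⊆ L)
    (hXd : X.card = d) (hqV : q ∈ V) (hqF : q ∉ F) : q ∉ L := by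
  have := hF.card_sdiff_eq hXF hXd hqV hqF
  rw [sdiff_eq_empty_iff_subset.mpr hXL, card_empty] at this
  split_ifs at this with hqL
  exact hqL

theorem mem_of_not_subset (hF : IsFlat V (Bd V d L) F) (hXF : X ⊆ F) (hXL : ¬ X ⊆ L)
    (hXd : X.card = d) (hqV : q ∈ V) (hqF : q ∉ F) : q ∈ L := by
  have := hF.card_sdiff_eq hXF hXd hqV hqF
  have hpos : 0 < (X \ L).card := card_pos.mpr (sdiff_nonempty.mpr hXL)
  split_ifs at this with hqL
  · exact hqL
  · omega

theorem eq_of_subset (hF : IsFlat V (Bd V d L) F) (hLV : L ⊆ V) (hFL : F ⊆ L)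
    (hdF : d ≤ F.card) : F = L := by
  obtain ⟨X, hXF, hXd⟩ := exists_subset_card_eq hdF
  refine hFL.antisymm fun q hqL => ?_
  by_contra hqF
  exact hF.notMem_of_subset hXF (hXF.trans hFL) hXd (hLV hqL) hqF hqL

theorem subset_of_lt_card (hF : IsFlat V (Bd V d L) F) (hd : 2 ≤ d) (hFV : F ≠ V)
    (hdF : d < F.card) : F ⊆ L := by
  obtain ⟨p, hpV, hpF⟩ := exists_of_ssubset (hF.1.ssubset_of_ne hFV)
  by_contra hFL
  obtain ⟨z, hzF, hzL⟩ := not_subset.mp hFL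
  by_cases htwo : 2 ≤ (F \ L).card
  · obtain ⟨T, hT, hTc⟩ := exists_subset_card_eq htwo
    obtain ⟨X, hTX, hXF, hXd⟩ :=
      exists_subsuperset_card_eq (hT.trans sdiff_subset) (hTc ▸ hd) hdF.le
    have hTXL : T ⊆ X \ L := fun a ha => mem_sdiff.mpr ⟨hTX ha, (mem_sdiff.mp (hT ha)).2⟩
    have hcard := hF.card_sdiff_eq hXF hXd hpV hpF
    have := card_le_card hTXL
    split_ifs at hcard <;> omega
  · obtain ⟨Y, hY, hYd⟩ : ∃ Y ⊆ F ∩ L, Y.card = d := by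
      apply exists_subset_card_eq
      have := card_inter_add_card_sdiff F L
      omega
    obtain ⟨X, hzX, hXF, hXd⟩ :=
      exists_subsuperset_card_eq (singleton_subset_iff.mpr hzF) (by rw [card_singleton]; omega) hdF.le
    exact hF.notMem_of_subset (hY.trans inter_subset_left) (hY.trans inter_subset_right) hYd
      hpV hpF (hF.mem_of_not_subset hXF (fun h => hzL (h (singleton_subset_iff.mp hzX)))
        hXd hpV hpF)

theorem card_add_one_eq (hF : IsFlat V (Bd V d L) F) (hLV : L ⊆ V) (hFV : F ≠ V)
    (hFd : F.card = d) (hFL : ¬ F ⊆ L) : L.card + 1 = V.card := by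
  obtain ⟨p, hpV, hpF⟩ := exists_of_ssubset (hF.1.ssubset_of_ne hFV)
  have hFL1 : (F \ L).card = 1 := by
    have := hF.card_sdiff_eq subset_rfl hFd hpV hpF
    rwa [if_pos (hF.mem_of_not_subset subset_rfl hFL hFd hpV hpF)] at this
  have hVLF : V \ L ⊆ F \ L := fun x hx => by
    obtain ⟨hxV, hxL⟩ := mem_sdiff.mp hx
    have hxF : x ∈ F := by
      by_contra hxF
      exact hxL (hF.mem_of_not_subset subset_rfl hFL hFd hxV hxF)
    exact mem_sdiff.mpr ⟨hxF, hxL⟩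
  have hVL : 0 < (V \ L).card :=
    card_pos.mpr (sdiff_nonempty.mpr fun hVL => hFL (hF.1.trans hVL))
  have := card_le_card hVLF
  have := card_sdiff_of_subset hLV
  have := card_le_card hLV
  omega

end IsFlat

theorem isFlat_Bd_iff (hd : 2 ≤ d) (hLV : L ⊆ V) :
    IsFlat V (Bd V d L) F ↔ F ⊆ V ∧ F.card < d ∨ F = L ∨ F = V ∨
      L.card + 1 = V.card ∧ F ⊆ V ∧ F.card = d ∧ ¬ F ⊆ L := by
  refine ⟨fun hF => ?_, ?_⟩
  · by_cases hFV : F = V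
    · exact .inr (.inr (.inl hFV))
    rcases lt_trichotomy F.card d with hlt | hFd | hgt
    · exact .inl ⟨hF.1, hlt⟩
    · by_cases hFL : F ⊆ L
      · exact .inr (.inl (hF.eq_of_subset hLV hFL hFd.ge))
      · exact .inr (.inr (.inr ⟨hF.card_add_one_eq hLV hFV hFd hFL, hF.1, hFd, hFL⟩))
    · exact .inr (.inl (hF.eq_of_subset hLV (hF.subset_of_lt_card hd hFV hgt) hgt.le))
  · rintro (⟨hFV, hlt⟩ | rfl | rfl | ⟨hVL, hFV, hFd, hFL⟩)
    · exact isFlat_Bd_of_card_lt hFV hlt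
    · exact isFlat_Bd_right hLV
    · exact isFlat_self _
    · exact isFlat_Bd_of_card_eq hVL hLV hFV hFd hFL

theorem flats_of_Bd_general (V : Finset α) (d : ℕ) (hd : 2 ≤ d) (L : Finset α)
    (hLV : L ⊆ V) :
    (L.card + 1 < V.card →
      {F : Finset α | IsFlat V (Bd V d L) F} =
        {F : Finset α | F ⊆ V ∧ F.card ≤ d - 1} ∪ ({L, V} : Set (Finset α))) ∧
    (L.card + 1 = V.card →
      {F : Finset α | IsFlat V (Bd V d L) F} =
        {F : Finset α | F ⊆ V ∧ F.card ≤ d - 1} ∪ ({L, V} : Set (Finset α)) ∪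
          {F : Finset α | F ⊆ V ∧ F.card = d ∧ ¬ F ⊆ L}) := by
  have hsmall (F : Finset α) : F.card ≤ d - 1 ↔ F.card < d := Nat.le_sub_one_iff_lt (by omega)
  refine ⟨fun hlt => ?_, fun heq => ?_⟩ <;> ext F <;>
    simp only [Set.mem_ofPred_eq, Set.mem_union, Set.mem_insert_iff, Set.mem_singleton_iff,
      isFlat_Bd_iff hd hLV, hsmall]
  · simp only [hlt.ne, false_and, or_false]
  · simp only [heq, true_and]
    tauto

/-- The flats of `(V, B_d(V,L))`: if `|L| < |V| − 1` they are exactly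
`P_{≤d−1}(V) ∪ {L, V}`; if `|L| = |V| − 1` they are
`P_{≤d−1}(V) ∪ {L, V} ∪ (P_d(V) \ P_d(L))`. -/
theorem flats_of_Bd (V : Finset α) (d : ℕ) (hd : 2 ≤ d) (L : Finset α)
    (hLV : L ⊆ V) (hdL : d ≤ L.card) (hLlt : L.card < V.card) :
    (L.card + 1 < V.card →
      {F : Finset α | IsFlat V (Bd V d L) F} =
        {F : Finset α | F ⊆ V ∧ F.card ≤ d - 1} ∪ ({L, V} : Set (Finset α))) ∧
    (L.card + 1 = V.card →
      {F : Finset α | IsFlat V (Bd V d L) F} =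
        {F : Finset α | F ⊆ V ∧ F.card ≤ d - 1} ∪ ({L, V} : Set (Finset α)) ∪
          {F : Finset α | F ⊆ V ∧ F.card = d ∧ ¬ F ⊆ L}) :=
  flats_of_Bd_general V d hd L hLV
end

section
/- Let d ≥ 2 and let 𝓛 be a nonempty family of subsets of V with d ≤ |L| < |V| for all L ∈ 𝓛, such that |L ∩ L'| ≤ d − 1 for all distinct L, L' ∈ 𝓛. Then every L ∈ 𝓛 is a flat of the complex (V, ∪_{L∈𝓛} B_d(V,L)). -/
/-!
A face `X ⊆ L` of the union complex has at most `d` elements: a `(d+1)`-face of `B_d(V,L')`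
meets `L'` in `d` points, which is impossible for `L' = L` and, for `L' ≠ L`, exceeds
`|L ∩ L'| ≤ d - 1`. Adding a point `p ∉ L` to such an `X` then gives a face of `B_d(V,L)`
itself: of size `≤ d`, or of size `d + 1` meeting `L` in exactly `X`.
-/

variable {α : Type*} [DecidableEq α]

section Bd

variable {V X L L' : Finset α} {d : ℕ}

theorem card_le_of_mem_Bd_of_subset (hX : X ∈ Bd V d L) (hXL : X ⊆ L) : X.card ≤ d := by
  obtain ⟨-, hle | ⟨-, hcap⟩⟩ := hX
  · exact hle
  · rw [Finset.inter_eq_left.mpr hXL] at hcap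
    omega

theorem card_le_of_mem_Bd_of_card_inter_lt (hX : X ∈ Bd V d L') (hlt : (X ∩ L').card < d) :
    X.card ≤ d := by
  obtain ⟨-, hle | ⟨-, hcap⟩⟩ := hX
  · exact hle
  · omega

theorem insert_mem_Bd (hLV : L ⊆ V) (hXL : X ⊆ L) (hX : X.card ≤ d) {p : α} (hpV : p ∈ V)
    (hpL : p ∉ L) : insert p X ∈ Bd V d L := by
  refine ⟨Finset.insert_subset hpV (hXL.trans hLV), ?_⟩
  rw [Finset.card_insert_of_notMem fun hpX => hpL (hXL hpX)]
  rcases hX.lt_or_eq with hlt | rfl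
  · exact .inl hlt
  · rw [Finset.insert_inter_of_notMem hpL, Finset.inter_eq_left.mpr hXL]
    exact .inr ⟨rfl, rfl⟩

end Bd

theorem mem_family_isFlat_of_union_Bd_general (V : Finset α) (d : ℕ) (hd : 2 ≤ d)
    (𝓛 : Set (Finset α))
    (hmem : ∀ L ∈ 𝓛, L ⊆ V ∧ d ≤ L.card ∧ L.card < V.card)
    (hint : ∀ L ∈ 𝓛, ∀ L' ∈ 𝓛, L ≠ L' → (L ∩ L').card ≤ d - 1) :
    ∀ L ∈ 𝓛, IsFlat V {X : Finset α | ∃ L' ∈ 𝓛, X ∈ Bd V d L'} L := by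
  intro L hL
  have hLV := (hmem L hL).1
  refine ⟨hLV, ?_⟩
  rintro X ⟨L', hL', hX⟩ hXL p hpV hpL
  have hXcard : X.card ≤ d := by
    by_cases hLL' : L = L'
    · subst hLL'
      exact card_le_of_mem_Bd_of_subset hX hXL
    · refine card_le_of_mem_Bd_of_card_inter_lt hX ?_
      have hXL' := Finset.card_le_card (Finset.inter_subset_inter_right (u := L') hXL)
      have hLL'card := hint L hL L' hL' hLL'
      omega
  exact ⟨L, hL, insert_mem_Bd hLV hXL hXcard hpV hpL⟩

/-- If `𝓛` is a nonempty family of proper subsets of `V` of size at least `d`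
with pairwise intersections of size at most `d−1`, then every `L ∈ 𝓛` is a flat
of the complex `(V, ⋃_{L ∈ 𝓛} B_d(V,L))`. -/
theorem mem_family_isFlat_of_union_Bd (V : Finset α) (d : ℕ) (hd : 2 ≤ d)
    (𝓛 : Set (Finset α)) (h𝓛 : 𝓛.Nonempty)
    (hmem : ∀ L ∈ 𝓛, L ⊆ V ∧ d ≤ L.card ∧ L.card < V.card)
    (hint : ∀ L ∈ 𝓛, ∀ L' ∈ 𝓛, L ≠ L' → (L ∩ L').card ≤ d - 1) :
    ∀ L ∈ 𝓛, IsFlat V {X : Finset α | ∃ L' ∈ 𝓛, X ∈ Bd V d L'} L :=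
  mem_family_isFlat_of_union_Bd_general V d hd 𝓛 hmem hint
end

section
/- Every paving boolean representable complex of dimension d is a near-matroid: if (V,H) ∈ BPav(d) and X, Y ∈ H satisfy cl(X) = cl(Y) ⊊ V, then |X| = |Y|. -/
variable {α : Type*} [DecidableEq α]

/-!
A face of size `d + 1` is spanned by no proper flat, because adding any vertex to it would give
a face of size `d + 2`; so faces with proper closure have at most `d` elements. A subset `Z ⊆ V`
with fewer than `d` elements is itself a flat (every `(|Z| + 1)`-subset of `V` is a face), hence
closed. If `cl X = cl Y ⊊ V` and `|X| < d`, then `Y ⊆ cl Y = cl X = X`, so `|Y| ≤ |X|`;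
otherwise `|Y| ≤ d = |X|`.
-/

variable {V : Finset α} {H : Set (Finset α)} {d : ℕ}

theorem inCl_of_mem {X : Finset α} {z : α} (hz : z ∈ X) : inCl V H X z :=
  fun _ _ hXF => hXF hz

theorem IsPav.isFlat_of_card_lt (hH : IsPav V H d) {Z : Finset α} (hZV : Z ⊆ V)
    (hZd : Z.card < d) : IsFlat V H Z := by
  refine ⟨hZV, fun W _ hWZ p hp _ => hH.2.1 _ ?_ ?_⟩
  · exact Finset.insert_subset hp (hWZ.trans hZV)
  · have := Finset.card_le_card hWZ
    have := Finset.card_insert_le p W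
    omega

theorem IsPav.mem_of_inCl_of_card_lt (hH : IsPav V H d) {Z : Finset α} (hZV : Z ⊆ V)
    (hZd : Z.card < d) {z : α} (hz : inCl V H Z z) : z ∈ Z :=
  hz Z (hH.isFlat_of_card_lt hZV hZd) subset_rfl

theorem IsPav.inCl_of_card_eq (hH : IsPav V H d) {Z : Finset α} (hZ : Z ∈ H)
    (hcard : Z.card = d + 1) {z : α} (hz : z ∈ V) : inCl V H Z z := by
  intro F hF hZF
  by_contra hzF
  have hins := hH.2.2.1 _ (hF.2 Z hZ hZF z hz hzF)
  rw [Finset.card_insert_of_notMem fun h => hzF (hZF h), hcard] at hins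
  omega

theorem IsPav.card_le_of_not_inCl (hH : IsPav V H d) {Z : Finset α} (hZ : Z ∈ H) {v : α}
    (hv : v ∈ V) (hZv : ¬ inCl V H Z v) : Z.card ≤ d := by
  by_contra! hlt
  exact hZv (hH.inCl_of_card_eq hZ (le_antisymm (hH.2.2.1 Z hZ) hlt) hv)

theorem IsPav.card_le_of_inCl_eq (hH : IsPav V H d) {X Y : Finset α} (hX : X ∈ H)
    (hXd : X.card ≤ d) (hYd : Y.card ≤ d) (hcl : ∀ z, inCl V H X z ↔ inCl V H Y z) :
    Y.card ≤ X.card := by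
  rcases hXd.lt_or_eq with hlt | heq
  · have hYX : Y ⊆ X := fun y hy =>
      hH.mem_of_inCl_of_card_lt (hH.1.1 X hX) hlt ((hcl y).2 (inCl_of_mem hy))
    exact Finset.card_le_card hYX
  · omega

theorem bpav_near_matroid_general (V : Finset α) (H : Set (Finset α))
    (d : ℕ) (hH : IsPav V H d)
    (X : Finset α) (hX : X ∈ H) (Y : Finset α) (hY : Y ∈ H)
    (hcl : ∀ z : α, inCl V H X z ↔ inCl V H Y z)
    (hproper : ∃ v ∈ V, ¬ inCl V H X v) :
    X.card = Y.card := by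
  obtain ⟨v, hv, hXv⟩ := hproper
  have hXd : X.card ≤ d := hH.card_le_of_not_inCl hX hv hXv
  have hYd : Y.card ≤ d := hH.card_le_of_not_inCl hY hv fun h => hXv ((hcl v).2 h)
  exact le_antisymm (hH.card_le_of_inCl_eq hY hYd hXd fun z => (hcl z).symm)
    (hH.card_le_of_inCl_eq hX hXd hYd hcl)

/-- Every paving boolean representable complex of dimension `d` is a
near-matroid: if faces `X, Y` have equal closures and this common closure is a
proper subset of `V`, then `|X| = |Y|`. Boolean representability is imposed via
the standard criterion. -/
theorem bpav_near_matroid (V : Finset α) (H : Set (Finset α)) (hV : V.Nonempty)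
    (d : ℕ) (hH : IsPav V H d)
    (hbr : ∀ X ∈ H, X.Nonempty → ∃ x ∈ X, ¬ inCl V H (X.erase x) x)
    (X : Finset α) (hX : X ∈ H) (Y : Finset α) (hY : Y ∈ H)
    (hcl : ∀ z : α, inCl V H X z ↔ inCl V H Y z)
    (hproper : ∃ v ∈ V, ¬ inCl V H X v) :
    X.card = Y.card :=
  bpav_near_matroid_general V H d hH X hX Y hY hcl hproper
end

section
/- Let (V,H) be a paving complex of dimension 1 (i.e. a graph with all singletons as faces and at least one edge). Then (V,H) goes up — i.e. T(H) contains a chain T₀ ⊂ T₁ ⊂ T₂ ⊂ T₃ — if and only if the defect graph Def(V,H), whose edges are the pairs in P_2(V) \ H, has more than two connected components. Moreover T(H) consists exactly of the unions of connected components of Def(V,H). -/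
variable {α : Type*} [DecidableEq α]

/-- Adjacency in the defect graph `Def(V,H)`: edges are pairs of `P_2(V) \ H`. -/
def DefAdj (V : Finset α) (H : Set (Finset α)) (x y : α) : Prop :=
  x ∈ V ∧ y ∈ V ∧ x ≠ y ∧ ({x, y} : Finset α) ∉ H

/-!
A set `T ⊆ V` lies in `T(H)` exactly when no edge of `Def(V,H)` leaves it, i.e. when it is a union
of connected components of `Def(V,H)`. A strict chain `T₀ ⊂ T₁ ⊂ T₂ ⊂ T₃` in `T(H)` therefore
yields `a ∈ T₁`, `b ∈ T₂ \ T₁`, `c ∈ T₃ \ T₂` in three different components; conversely, if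
`a`, `b`, `c` lie in three different components `C a`, `C b`, `C c`, then
`∅ ⊂ C a ⊂ C a ∪ C b ⊂ V` is such a chain.
-/

section DefectGraph

variable (V : Finset α) (H : Set (Finset α))

theorem mem_TofH_iff {T : Finset α} :
    T ∈ TofH V H ↔ T ⊆ V ∧ ∀ x ∈ T, ∀ y : α, DefAdj V H x y → y ∈ T := by
  refine and_congr_right fun hTV => ⟨fun hT x hx y hxy => ?_, fun hT x hx p hpV hpT => ?_⟩
  · by_contra hyT
    exact hxy.2.2.2 (hT x hx y hxy.2.1 hyT)
  · by_contra hxp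
    exact hpT (hT x hx p ⟨hTV hx, hpV, fun h => hpT (h ▸ hx), hxp⟩)

variable {V H}

theorem mem_of_mem_TofH_of_reflTransGen {T : Finset α} (hT : T ∈ TofH V H) {x y : α} (hx : x ∈ T)
    (hxy : Relation.ReflTransGen (DefAdj V H) x y) : y ∈ T := by
  induction hxy with
  | refl => exact hx
  | tail _ hyz hy => exact ((mem_TofH_iff V H).1 hT).2 _ hy _ hyz

theorem not_reflTransGen_of_mem_TofH {T : Finset α} (hT : T ∈ TofH V H) {x y : α} (hx : x ∈ T)
    (hy : y ∉ T) : ¬ Relation.ReflTransGen (DefAdj V H) x y :=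
  fun hxy => hy (mem_of_mem_TofH_of_reflTransGen hT hx hxy)

theorem empty_mem_TofH : (∅ : Finset α) ∈ TofH V H := by
  simp [TofH]

theorem self_mem_TofH : V ∈ TofH V H :=
  ⟨subset_rfl, fun _ _ _ hpV hpV' => absurd hpV hpV'⟩

theorem union_mem_TofH {T S : Finset α} (hT : T ∈ TofH V H) (hS : S ∈ TofH V H) :
    T ∪ S ∈ TofH V H := by
  refine ⟨Finset.union_subset hT.1 hS.1, fun x hx p hpV hpTS => ?_⟩
  rw [Finset.mem_union, not_or] at hpTS
  rcases Finset.mem_union.1 hx with hx | hx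
  · exact hT.2 x hx p hpV hpTS.1
  · exact hS.2 x hx p hpV hpTS.2

open scoped Classical in
variable (V H) in
noncomputable def defComponent (v : α) : Finset α :=
  V.filter (Relation.ReflTransGen (DefAdj V H) v)

theorem mem_defComponent {v w : α} :
    w ∈ defComponent V H v ↔ w ∈ V ∧ Relation.ReflTransGen (DefAdj V H) v w := by
  classical
  exact Finset.mem_filter

theorem mem_defComponent_self {v : α} (hv : v ∈ V) : v ∈ defComponent V H v :=
  mem_defComponent.2 ⟨hv, .refl⟩

theorem defComponent_mem_TofH (v : α) : defComponent V H v ∈ TofH V H := by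
  refine (mem_TofH_iff V H).2 ⟨fun w hw => (mem_defComponent.1 hw).1, fun x hx y hxy => ?_⟩
  exact mem_defComponent.2 ⟨hxy.2.1, (mem_defComponent.1 hx).2.tail hxy⟩

theorem exists_not_reflTransGen_of_chain {T₀ T₁ T₂ T₃ : Finset α} (h₁ : T₁ ∈ TofH V H)
    (h₂ : T₂ ∈ TofH V H) (h₃ : T₃ ∈ TofH V H) (h₀₁ : T₀ ⊂ T₁) (h₁₂ : T₁ ⊂ T₂) (h₂₃ : T₂ ⊂ T₃) :
    ∃ a b c : α, a ∈ V ∧ b ∈ V ∧ c ∈ V ∧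
      ¬ Relation.ReflTransGen (DefAdj V H) a b ∧
      ¬ Relation.ReflTransGen (DefAdj V H) b c ∧
      ¬ Relation.ReflTransGen (DefAdj V H) a c := by
  obtain ⟨a, ha₁, -⟩ := Finset.exists_of_ssubset h₀₁
  obtain ⟨b, hb₂, hb₁⟩ := Finset.exists_of_ssubset h₁₂
  obtain ⟨c, hc₃, hc₂⟩ := Finset.exists_of_ssubset h₂₃
  exact ⟨a, b, c, h₁.1 ha₁, h₂.1 hb₂, h₃.1 hc₃, not_reflTransGen_of_mem_TofH h₁ ha₁ hb₁,
    not_reflTransGen_of_mem_TofH h₂ hb₂ hc₂,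
    not_reflTransGen_of_mem_TofH h₂ (h₁₂.subset ha₁) hc₂⟩

theorem exists_chain_of_not_reflTransGen {a b c : α} (ha : a ∈ V) (hb : b ∈ V) (hc : c ∈ V)
    (hab : ¬ Relation.ReflTransGen (DefAdj V H) a b)
    (hbc : ¬ Relation.ReflTransGen (DefAdj V H) b c)
    (hac : ¬ Relation.ReflTransGen (DefAdj V H) a c) :
    ∃ T₀ T₁ T₂ T₃ : Finset α, T₀ ∈ TofH V H ∧ T₁ ∈ TofH V H ∧
      T₂ ∈ TofH V H ∧ T₃ ∈ TofH V H ∧ T₀ ⊂ T₁ ∧ T₁ ⊂ T₂ ∧ T₂ ⊂ T₃ := by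
  have hCa : defComponent V H a ∈ TofH V H := defComponent_mem_TofH a
  have hCab := union_mem_TofH hCa (defComponent_mem_TofH b)
  refine ⟨∅, _, _, V, empty_mem_TofH, hCa, hCab, self_mem_TofH, ?_, ?_, ?_⟩
  · exact Finset.empty_ssubset.2 ⟨a, mem_defComponent_self ha⟩
  · refine Finset.ssubset_iff_of_subset Finset.subset_union_left |>.2 ⟨b, ?_, ?_⟩
    · exact Finset.mem_union_right _ (mem_defComponent_self hb)
    · exact fun h => hab (mem_defComponent.1 h).2
  · refine Finset.ssubset_iff_of_subset hCab.1 |>.2 ⟨c, hc, ?_⟩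
    rw [Finset.mem_union, mem_defComponent, mem_defComponent]
    tauto

end DefectGraph

theorem goes_up_iff_defect_components_general (V : Finset α) (H : Set (Finset α)) :
    (∀ T : Finset α, T ∈ TofH V H ↔
        (T ⊆ V ∧ ∀ x ∈ T, ∀ y : α, DefAdj V H x y → y ∈ T)) ∧
    ((∃ T₀ T₁ T₂ T₃ : Finset α, T₀ ∈ TofH V H ∧ T₁ ∈ TofH V H ∧
        T₂ ∈ TofH V H ∧ T₃ ∈ TofH V H ∧ T₀ ⊂ T₁ ∧ T₁ ⊂ T₂ ∧ T₂ ⊂ T₃) ↔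
      ∃ a b c : α, a ∈ V ∧ b ∈ V ∧ c ∈ V ∧
        ¬ Relation.ReflTransGen (DefAdj V H) a b ∧
        ¬ Relation.ReflTransGen (DefAdj V H) b c ∧
        ¬ Relation.ReflTransGen (DefAdj V H) a c) := by
  refine ⟨fun T => mem_TofH_iff V H, ?_, ?_⟩
  · rintro ⟨T₀, T₁, T₂, T₃, -, h₁, h₂, h₃, h₀₁, h₁₂, h₂₃⟩
    exact exists_not_reflTransGen_of_chain h₁ h₂ h₃ h₀₁ h₁₂ h₂₃
  · rintro ⟨a, b, c, ha, hb, hc, hab, hbc, hac⟩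
    exact exists_chain_of_not_reflTransGen ha hb hc hab hbc hac

/-- For a paving complex of dimension 1: `T(H)` consists exactly of the unions of
connected components of the defect graph, and `(V,H)` goes up (there is a chain
`T₀ ⊂ T₁ ⊂ T₂ ⊂ T₃` in `T(H)`) if and only if the defect graph has more than two
connected components (three pairwise non-connected vertices exist). -/
theorem goes_up_iff_defect_components (V : Finset α) (H : Set (Finset α))
    (hV : V.Nonempty) (hH : IsPav V H 1) :
    (∀ T : Finset α, T ∈ TofH V H ↔
        (T ⊆ V ∧ ∀ x ∈ T, ∀ y : α, DefAdj V H x y → y ∈ T)) ∧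
    ((∃ T₀ T₁ T₂ T₃ : Finset α, T₀ ∈ TofH V H ∧ T₁ ∈ TofH V H ∧
        T₂ ∈ TofH V H ∧ T₃ ∈ TofH V H ∧ T₀ ⊂ T₁ ∧ T₁ ⊂ T₂ ∧ T₂ ⊂ T₃) ↔
      ∃ a b c : α, a ∈ V ∧ b ∈ V ∧ c ∈ V ∧
        ¬ Relation.ReflTransGen (DefAdj V H) a b ∧
        ¬ Relation.ReflTransGen (DefAdj V H) b c ∧
        ¬ Relation.ReflTransGen (DefAdj V H) a c) :=
  goes_up_iff_defect_components_general V H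
end
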